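/- Let Ω ∈ {0,1}^{N×M}, V ∈ ℝ^{M×D}, σ > 0 with α = 1/σ², and let Λ ∈ ℝ^{N×N} be symmetric. Define C ∈ ℝ^{ND×ND} as the D×D block matrix whose (d,d') block is the diagonal N×N matrix c(d,d') = diag( { Σ_{j=1}^{M} Ω_{ij} V_{jd} V_{jd'} }_{i=1}^{N} ). Then for every U ∈ ℝ^{N×D}, with vec(U) ∈ ℝ^{ND} the vector obtained by stacking the columns U_{:1}, …, U_{:D} of U: (1/σ²) Σ_{i=1}^{N} Σ_{j=1}^{M} Ω_{ij} (U_{i:} V_{j:}ᵀ)² + Σ_{d=1}^{D} U_{:d}ᵀ Λ U_{:d} = vec(U)ᵀ ( I_D ⊗ Λ + α C ) vec(U), where ⊗ denotes the Kronecker product. In particular, the posterior precision matrix of vec(U) in the GPMF model is I_D ⊗ Λ + α C. -/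
import Mathlib


open Matrix BigOperators Kronecker

/-- The `D×D` block matrix `C` whose `(d,d')` block is the diagonal `N×N` matrix
`diag({ Σ_j Ω_{ij} V_{jd} V_{jd'} }_{i=1}^N)`.  A vector indexed by
`Fin D × Fin N` is the stacking of the `D` columns (vec ordering). -/
noncomputable def Cmat {N M D : ℕ} (Ω : Matrix (Fin N) (Fin M) ℝ)
    (V : Matrix (Fin M) (Fin D) ℝ) : Matrix (Fin D × Fin N) (Fin D × Fin N) ℝ :=
  Matrix.of fun p q =>
    if p.2 = q.2 then ∑ j, Ω p.2 j * V j p.1 * V j q.1 else 0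

theorem stmt6 {N M D : ℕ} (Ω : Matrix (Fin N) (Fin M) ℝ)
    (hΩ : ∀ i j, Ω i j = 0 ∨ Ω i j = 1)
    (V : Matrix (Fin M) (Fin D) ℝ) (σ : ℝ) (hσ : 0 < σ)
    (Λ : Matrix (Fin N) (Fin N) ℝ) (hΛ : Λ.IsSymm)
    (U : Matrix (Fin N) (Fin D) ℝ) :
    (1 / σ ^ 2) * (∑ i, ∑ j, Ω i j * (∑ d, U i d * V j d) ^ 2)
        + ∑ d, (fun i => U i d) ⬝ᵥ Λ.mulVec (fun i => U i d) =
      (fun p : Fin D × Fin N => U p.2 p.1) ⬝ᵥ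
        ((1 : Matrix (Fin D) (Fin D) ℝ) ⊗ₖ Λ + (1 / σ ^ 2) • Cmat Ω V).mulVec
          (fun p : Fin D × Fin N => U p.2 p.1) := by
  rw [add_mulVec, dotProduct_add, add_comm]
  congr 1
  · simp only [dotProduct, mulVec, Fintype.sum_prod_type, Matrix.kroneckerMap_apply,
      Matrix.one_apply, ite_mul, zero_mul, mul_ite, mul_zero]
    rw [Finset.sum_congr rfl]
    intro d _
    rw [Finset.sum_congr rfl]
    intro i _
    rw [Finset.sum_comm]
    simp [Finset.sum_ite_eq]
  · simp only [dotProduct, mulVec, Fintype.sum_prod_type, Matrix.smul_apply, Cmat, Matrix.of_apply,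
      smul_eq_mul, mul_ite, mul_zero, ite_mul, zero_mul]
    rw [Finset.mul_sum]
    rw [Finset.sum_comm]
    rw [Finset.sum_congr rfl]
    intro i _
    rw [Finset.mul_sum]
    simp only [Finset.sum_ite_eq (Finset.univ) i, Finset.mem_univ, if_true]
    simp only [pow_two, Finset.sum_mul_sum, Finset.mul_sum, Finset.sum_mul]
    rw [Finset.sum_comm]
    refine Finset.sum_congr rfl fun d _ => ?_
    rw [Finset.sum_comm]
    refine Finset.sum_congr rfl fun d' _ => ?_
    refine Finset.sum_congr rfl fun j _ => ?_
    ring
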